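/- Let L ≥ 1 be a natural number, let p assign to every binary string ε of length |ε| ≤ L a number p_ε ∈ [0,1) with p_ε = 0 whenever |ε| = L, and let ν assign to every binary string ε of length |ε| < L a number ν_ε > 0. Then there exists a unique function q assigning to every binary string ε of length |ε| ≤ L a number q_ε ∈ [0,1), with q_ε = 0 whenever |ε| = L, such that for every string ε with |ε| < L: (q_ε/(1 − q_ε)) * (1 − q_{ε0}) * (1 − q_{ε1}) = (p_ε/(1 − p_ε)) * (1 − p_{ε0}) * (1 − p_{ε1}) * ν_ε. -/

import Mathlib

/-!
Write `c_ε` for the right-hand side. Since `x ↦ x / (1 - x)` is a bijection from `[0, 1)` onto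
`[0, ∞)` with inverse `t ↦ t / (1 + t)`, the equation at `ε` determines `q_ε` from `c_ε ≥ 0` and
the two children `q_{ε0}, q_{ε1} < 1`:
`q_ε / (1 - q_ε) = c_ε / ((1 - q_{ε0}) (1 - q_{ε1}))`.
Starting from `q = 0` at the leaves, this defines `q` level by level towards the root, and any
solution must agree with it, again level by level.
-/

open Set

lemma div_one_add_mem_Ico {t : ℝ} (ht : 0 ≤ t) : t / (1 + t) ∈ Ico (0 : ℝ) 1 :=
  ⟨by positivity, (div_lt_one (by linarith)).2 (by linarith)⟩

lemma div_one_add_div_one_sub_div_one_add {t : ℝ} (ht : 1 + t ≠ 0) :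
    t / (1 + t) / (1 - t / (1 + t)) = t := by
  field_simp
  ring

lemma injOn_div_one_sub : InjOn (fun x : ℝ => x / (1 - x)) (Iio 1) := by
  intro x hx y hy hxy
  have hx' : (1 : ℝ) - x ≠ 0 := sub_ne_zero.2 (ne_of_gt hx)
  have hy' : (1 : ℝ) - y ≠ 0 := sub_ne_zero.2 (ne_of_gt hy)
  rw [div_eq_div_iff hx' hy'] at hxy
  linarith

def IsOddsSolution (L : ℕ) (c q : List Bool → ℝ) : Prop :=
  (∀ ε : List Bool, ε.length ≤ L → q ε ∈ Ico (0 : ℝ) 1) ∧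
    (∀ ε : List Bool, ε.length = L → q ε = 0) ∧
    (∀ ε : List Bool, ε.length < L →
      q ε / (1 - q ε) * (1 - q (ε ++ [false])) * (1 - q (ε ++ [true])) = c ε)

/-- `n` is the distance to the leaves: the solution is `fun ε => oddsSolve c (L - ε.length) ε`. -/
noncomputable def oddsSolve (c : List Bool → ℝ) : ℕ → List Bool → ℝ
  | 0, _ => 0
  | n + 1, ε =>
    let t := c ε / ((1 - oddsSolve c n (ε ++ [false])) * (1 - oddsSolve c n (ε ++ [true])))
    t / (1 + t)

section oddsSolve

variable {c : List Bool → ℝ} {L : ℕ}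

lemma oddsSolve_succ_of_nonneg {n : ℕ} {ε : List Bool} (hc : 0 ≤ c ε)
    (h₀ : oddsSolve c n (ε ++ [false]) < 1) (h₁ : oddsSolve c n (ε ++ [true]) < 1) :
    oddsSolve c (n + 1) ε ∈ Ico (0 : ℝ) 1 ∧
      oddsSolve c (n + 1) ε / (1 - oddsSolve c (n + 1) ε) *
        (1 - oddsSolve c n (ε ++ [false])) * (1 - oddsSolve c n (ε ++ [true])) = c ε := by
  have hD : 0 < (1 - oddsSolve c n (ε ++ [false])) * (1 - oddsSolve c n (ε ++ [true])) :=
    mul_pos (sub_pos.2 h₀) (sub_pos.2 h₁)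
  have ht : 0 ≤ c ε / ((1 - oddsSolve c n (ε ++ [false])) * (1 - oddsSolve c n (ε ++ [true]))) :=
    div_nonneg hc hD.le
  refine ⟨div_one_add_mem_Ico ht, ?_⟩
  rw [oddsSolve, div_one_add_div_one_sub_div_one_add (by linarith), mul_assoc,
    div_mul_cancel₀ _ hD.ne']

lemma oddsSolve_mem_Ico (hc : ∀ ε : List Bool, ε.length < L → 0 ≤ c ε) :
    ∀ n : ℕ, ∀ ε : List Bool, ε.length + n ≤ L → oddsSolve c n ε ∈ Ico (0 : ℝ) 1
  | 0, _, _ => by simp [oddsSolve]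
  | n + 1, ε, hε =>
    (oddsSolve_succ_of_nonneg (hc ε (by omega))
      (oddsSolve_mem_Ico hc n _ (by simp; omega)).2
      (oddsSolve_mem_Ico hc n _ (by simp; omega)).2).1

theorem isOddsSolution_oddsSolve (hc : ∀ ε : List Bool, ε.length < L → 0 ≤ c ε) :
    IsOddsSolution L c (fun ε => oddsSolve c (L - ε.length) ε) := by
  refine ⟨fun ε hε => oddsSolve_mem_Ico hc _ ε (by omega),
    fun ε hε => by simp [hε, oddsSolve], fun ε hε => ?_⟩
  obtain ⟨n, hn⟩ : ∃ n, L - ε.length = n + 1 := ⟨L - ε.length - 1, by omega⟩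
  have hchild : ∀ b : Bool, L - (ε ++ [b]).length = n := fun b => by simp; omega
  simp only [hn, hchild]
  exact (oddsSolve_succ_of_nonneg (hc ε hε)
    (oddsSolve_mem_Ico hc n _ (by simp; omega)).2
    (oddsSolve_mem_Ico hc n _ (by simp; omega)).2).2

end oddsSolve

theorem IsOddsSolution.eq {L : ℕ} {c q q' : List Bool → ℝ} (hq : IsOddsSolution L c q)
    (hq' : IsOddsSolution L c q') {ε : List Bool} (hε : ε.length ≤ L) : q' ε = q ε := by
  obtain ⟨hmem, hleaf, heq⟩ := hq
  obtain ⟨hmem', hleaf', heq'⟩ := hq'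
  obtain ⟨n, hn⟩ : ∃ n, ε.length + n = L := ⟨L - ε.length, by omega⟩
  induction n generalizing ε with
  | zero => rw [hleaf ε hn, hleaf' ε hn]
  | succ n ih =>
    have hchild : ∀ b : Bool, q' (ε ++ [b]) = q (ε ++ [b]) := fun b =>
      ih (by simp; omega) (by simp; omega)
    have hD : (1 - q (ε ++ [false])) * (1 - q (ε ++ [true])) ≠ 0 :=
      mul_ne_zero (sub_ne_zero.2 (hmem _ (by simp; omega)).2.ne')
        (sub_ne_zero.2 (hmem _ (by simp; omega)).2.ne')
    have hodds : q' ε / (1 - q' ε) = q ε / (1 - q ε) := by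
      have h := (heq' ε (by omega)).trans (heq ε (by omega)).symm
      rw [hchild, hchild, mul_assoc, mul_assoc] at h
      exact mul_right_cancel₀ hD h
    exact injOn_div_one_sub (hmem' ε hε).2 (hmem ε hε).2 hodds

theorem stmt_17 (L : ℕ) (p ν : List Bool → ℝ)
    (hp : ∀ ε : List Bool, ε.length ≤ L → p ε ∈ Set.Ico (0 : ℝ) 1)
    (hν : ∀ ε : List Bool, ε.length < L → 0 < ν ε) :
    ∃ q : List Bool → ℝ,
      ((∀ ε : List Bool, ε.length ≤ L → q ε ∈ Set.Ico (0 : ℝ) 1) ∧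
        (∀ ε : List Bool, ε.length = L → q ε = 0) ∧
        (∀ ε : List Bool, ε.length < L →
          q ε / (1 - q ε) * (1 - q (ε ++ [false])) * (1 - q (ε ++ [true])) =
            p ε / (1 - p ε) * (1 - p (ε ++ [false])) * (1 - p (ε ++ [true])) * ν ε)) ∧
      ∀ q' : List Bool → ℝ,
        ((∀ ε : List Bool, ε.length ≤ L → q' ε ∈ Set.Ico (0 : ℝ) 1) ∧
          (∀ ε : List Bool, ε.length = L → q' ε = 0) ∧
          (∀ ε : List Bool, ε.length < L →
            q' ε / (1 - q' ε) * (1 - q' (ε ++ [false])) * (1 - q' (ε ++ [true])) =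
              p ε / (1 - p ε) * (1 - p (ε ++ [false])) * (1 - p (ε ++ [true])) * ν ε)) →
        ∀ ε : List Bool, ε.length ≤ L → q' ε = q ε := by
  have hc : ∀ ε : List Bool, ε.length < L →
      0 ≤ p ε / (1 - p ε) * (1 - p (ε ++ [false])) * (1 - p (ε ++ [true])) * ν ε := by
    intro ε hε
    have hpε := hp ε hε.le
    have := sub_nonneg.2 hpε.2.le
    have := sub_nonneg.2 (hp (ε ++ [false]) (by simpa using hε)).2.le
    have := sub_nonneg.2 (hp (ε ++ [true]) (by simpa using hε)).2.le
    have := hpε.1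
    have := (hν ε hε).le
    positivity
  exact ⟨_, isOddsSolution_oddsSolve hc, fun q' hq' ε hε =>
    (isOddsSolution_oddsSolve hc).eq hq' hε⟩
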